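/- arXiv:2405.16148 — 2 statements merged into one kernel-verified Lean document; each statement's English description precedes it below -/
import Mathlib

section
/- Let W be a symmetric N×N real matrix and fix distinct indices a, b. Define the 'lifted' matrix W_l by W_l[i,j] = (W[a,a]+2W[a,b]+W[b,b])/4 if i,j ∈ {a,b}; W_l[i,j] = (W[a,j]+W[b,j])/2 if i ∈ {a,b}, j ∉ {a,b}; W_l[i,j] = (W[i,a]+W[i,b])/2 if i ∉ {a,b}, j ∈ {a,b}; and W_l[i,j] = W[i,j] otherwise. If ‖W[a,:] - W[b,:]‖_1 ≤ ε, then ‖W_l - W‖_∞ ≤ ε, where ‖·‖_∞ denotes the maximum absolute row sum norm. -/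
private lemma key_ineq (p q r : ℝ) :
    |(p + 2*q + r)/4 - p| + |(p + 2*q + r)/4 - q| ≤ |p - q| + |q - r| := by
  rcases abs_cases ((p + 2*q + r)/4 - p) with ⟨h1, _⟩ | ⟨h1, _⟩ <;>
  rcases abs_cases ((p + 2*q + r)/4 - q) with ⟨h2, _⟩ | ⟨h2, _⟩ <;>
  rcases abs_cases (p - q) with ⟨h3, h3'⟩ | ⟨h3, h3'⟩ <;>
  rcases abs_cases (q - r) with ⟨h4, h4'⟩ | ⟨h4, h4'⟩ <;>
  linarith

private lemma row_a (N : ℕ) (W : Matrix (Fin N) (Fin N) ℝ)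
    (a b : Fin N) (hab : a ≠ b) (ε : ℝ)
    (Wl : Matrix (Fin N) (Fin N) ℝ)
    (hWl : ∀ i j, Wl i j =
      if (i = a ∨ i = b) ∧ (j = a ∨ j = b) then (W a a + 2 * W a b + W b b) / 4
      else if i = a ∨ i = b then (W a j + W b j) / 2
      else if j = a ∨ j = b then (W i a + W i b) / 2
      else W i j)
    (hW : W b a = W a b)
    (h : ∑ j, |W a j - W b j| ≤ ε) :
    ∑ j, |Wl a j - W a j| ≤ ε := by
  calc ∑ j, |Wl a j - W a j| ≤ ∑ j, |W a j - W b j| := by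
        rw [← Finset.sum_add_sum_compl ({a, b} : Finset (Fin N)) (fun j => |Wl a j - W a j|),
            ← Finset.sum_add_sum_compl ({a, b} : Finset (Fin N)) (fun j => |W a j - W b j|)]
        refine add_le_add ?_ ?_
        · rw [Finset.sum_pair hab, Finset.sum_pair hab, hWl a a, hWl a b,
            if_pos (⟨Or.inl rfl, Or.inl rfl⟩ : (a = a ∨ a = b) ∧ (a = a ∨ a = b)),
            if_pos (⟨Or.inl rfl, Or.inr rfl⟩ : (a = a ∨ a = b) ∧ (b = a ∨ b = b)), hW]
          exact key_ineq (W a a) (W a b) (W b b)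
        · refine Finset.sum_le_sum ?_
          intro j hj
          simp only [Finset.mem_compl, Finset.mem_insert, Finset.mem_singleton, not_or] at hj
          obtain ⟨hj1, hj2⟩ := hj
          rw [hWl, if_neg (by tauto), if_pos (Or.inl rfl : a = a ∨ a = b)]
          have e : (W a j + W b j)/2 - W a j = -((W a j - W b j)/2) := by ring
          rw [e, abs_neg, abs_div, abs_of_pos (by norm_num : (0:ℝ) < 2)]
          exact half_le_self (abs_nonneg _)
    _ ≤ ε := h

theorem stmt1 (N : ℕ) (W : Matrix (Fin N) (Fin N) ℝ) (hsymm : W.IsSymm)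
    (a b : Fin N) (hab : a ≠ b) (ε : ℝ)
    (Wl : Matrix (Fin N) (Fin N) ℝ)
    (hWl : ∀ i j, Wl i j =
      if (i = a ∨ i = b) ∧ (j = a ∨ j = b) then (W a a + 2 * W a b + W b b) / 4
      else if i = a ∨ i = b then (W a j + W b j) / 2
      else if j = a ∨ j = b then (W i a + W i b) / 2
      else W i j)
    (h : ∑ j, |W a j - W b j| ≤ ε) :
    ∀ i, ∑ j, |Wl i j - W i j| ≤ ε := by
  have hW : W b a = W a b := hsymm.apply a b
  intro i
  by_cases hia : i = a
  · subst hia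
    exact row_a N W i b hab ε Wl hWl hW h
  by_cases hib : i = b
  · subst hib
    have h' : ∑ j, |W i j - W a j| ≤ ε := by
      have e : ∀ j, |W i j - W a j| = |W a j - W i j| := fun j => abs_sub_comm _ _
      simpa only [e] using h
    refine row_a N W i a hia ε Wl ?_ hW.symm h'
    intro i' j
    rw [hWl i' j]
    by_cases h1 : i' = a ∨ i' = i <;> by_cases h2 : j = a ∨ j = i
    · rw [if_pos ⟨h1, h2⟩, if_pos ⟨h1.symm, h2.symm⟩]
      linarith [hW]
    · rw [if_neg (fun hc => h2 hc.2), if_pos h1,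
        if_neg (fun hc : (i' = i ∨ i' = a) ∧ (j = i ∨ j = a) => h2 hc.2.symm),
        if_pos h1.symm]
      ring
    · rw [if_neg (fun hc => h1 hc.1), if_neg h1, if_pos h2,
        if_neg (fun hc : (i' = i ∨ i' = a) ∧ (j = i ∨ j = a) => h1 hc.1.symm),
        if_neg (fun hc : i' = i ∨ i' = a => h1 hc.symm), if_pos h2.symm]
      ring
    · rw [if_neg (fun hc => h1 hc.1), if_neg h1, if_neg h2,
        if_neg (fun hc : (i' = i ∨ i' = a) ∧ (j = i ∨ j = a) => h1 hc.1.symm),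
        if_neg (fun hc : i' = i ∨ i' = a => h1 hc.symm),
        if_neg (fun hc : j = i ∨ j = a => h2 hc.symm)]
  · -- i ∉ {a, b}
    have hi : ¬ (i = a ∨ i = b) := by tauto
    have hsum : ∑ j, |Wl i j - W i j| = ∑ j ∈ ({a, b} : Finset (Fin N)), |Wl i j - W i j| := by
      refine (Finset.sum_subset (Finset.subset_univ _) ?_).symm
      intro j _ hj
      simp only [Finset.mem_insert, Finset.mem_singleton, not_or] at hj
      rw [hWl, if_neg (by tauto), if_neg hi, if_neg (by tauto), sub_self, abs_zero]
    rw [hsum, Finset.sum_pair hab, hWl i a, hWl i b,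
      if_neg (by tauto), if_neg hi, if_pos (Or.inl rfl : a = a ∨ a = b),
      if_neg (by tauto), if_neg hi, if_pos (Or.inr rfl : b = a ∨ b = b)]
    have e1 : (W i a + W i b)/2 - W i a = -((W i a - W i b)/2) := by ring
    have e2 : (W i a + W i b)/2 - W i b = (W i a - W i b)/2 := by ring
    rw [e1, e2, abs_neg]
    have hWa : W i a = W a i := (hsymm.apply i a).symm
    have hWb : W i b = W b i := (hsymm.apply i b).symm
    have hle : |W a i - W b i| ≤ ∑ j, |W a j - W b j| :=
      Finset.single_le_sum (f := fun j => |W a j - W b j|)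
        (fun j _ => abs_nonneg _) (Finset.mem_univ i)
    calc |(W i a - W i b)/2| + |(W i a - W i b)/2| = |W a i - W b i| := by
          rw [hWa, hWb, abs_div, abs_of_pos (by norm_num : (0:ℝ) < 2)]; ring
      _ ≤ ε := le_trans hle h
end

section
/- Let W be a symmetric N×N matrix, a ≠ b fixed indices, and construct the lifted combinatorial Laplacian L_l = D_l - W_l as in the paper (with W_l obtained by averaging rows/columns a and b, and D_l the corresponding degree matrix averaging d_a and d_b). Let L = D - W be the original combinatorial Laplacian with eigenvalues λ and let λ_l be the eigenvalues of L_l, both sorted decreasingly. If ‖W[a,:] - W[b,:]‖_1 ≤ ε, then Σ_{i=1}^N |λ_i - λ_{li}| ≤ (3N/2)·ε. -/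
open Matrix Finset

variable {N : ℕ}

noncomputable def qf (A : Matrix (Fin N) (Fin N) ℝ) (x : Fin N → ℝ) : ℝ := ∑ i, x i * (A *ᵥ x) i

lemma qf_eq_inner (A : Matrix (Fin N) (Fin N) ℝ) (x : EuclideanSpace ℝ (Fin N)) :
    qf A x = inner ℝ x (Matrix.toEuclideanLin A x) := by
  simp only [qf, PiLp.inner_apply, Matrix.toEuclideanLin_apply, RCLike.inner_apply, conj_trivial]
  exact Finset.sum_congr rfl fun _ _ => mul_comm _ _

lemma eigen_eq (A : Matrix (Fin N) (Fin N) ℝ) (hA : A.IsHermitian) (j : Fin N) :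
    Matrix.toEuclideanLin A (hA.eigenvectorBasis j) = hA.eigenvalues j • hA.eigenvectorBasis j := by
  rw [Matrix.toEuclideanLin_apply]
  ext i
  simpa using congrFun (hA.mulVec_eigenvectorBasis j) i

lemma qf_eq_sum (A : Matrix (Fin N) (Fin N) ℝ) (hA : A.IsHermitian) (x : EuclideanSpace ℝ (Fin N)) :
    qf A x = ∑ j, hA.eigenvalues j * (inner ℝ (hA.eigenvectorBasis j) x : ℝ)^2 := by
  have hsym : (Matrix.toEuclideanLin A).IsSymmetric :=
    Matrix.isHermitian_iff_isSymmetric.mp hA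
  rw [qf_eq_inner, ← (hA.eigenvectorBasis).sum_inner_mul_inner x (Matrix.toEuclideanLin A x)]
  congr 1; ext j
  have h1 : (inner ℝ (hA.eigenvectorBasis j) ((Matrix.toEuclideanLin A) x) : ℝ)
      = hA.eigenvalues j * inner ℝ (hA.eigenvectorBasis j) x := by
    rw [← hsym (hA.eigenvectorBasis j) x, eigen_eq A hA j, inner_smul_left]
    simp
  rw [h1, real_inner_comm x]
  ring

lemma norm_eq_sum (A : Matrix (Fin N) (Fin N) ℝ) (hA : A.IsHermitian) (x : EuclideanSpace ℝ (Fin N)) :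
    (∑ i, x i ^ 2) = ∑ j, (inner ℝ (hA.eigenvectorBasis j) x : ℝ)^2 := by
  have h := (hA.eigenvectorBasis).sum_inner_mul_inner x x
  have h2 : (inner ℝ x x : ℝ) = ∑ i, x i^2 := by
    rw [real_inner_self_eq_norm_sq, EuclideanSpace.norm_sq_eq]; simp only [Real.norm_eq_abs, sq_abs]
  rw [← h] at h2
  rw [← h2]
  congr 1; ext j
  rw [real_inner_comm x]
  ring
variable {N : ℕ}

lemma inner_eq_zero_of_mem_span (b : OrthonormalBasis (Fin N) ℝ (EuclideanSpace ℝ (Fin N)))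
    (J : Finset (Fin N)) {x : EuclideanSpace ℝ (Fin N)}
    (hx : x ∈ Submodule.span ℝ (b '' ↑J)) {j : Fin N} (hj : j ∉ J) :
    (inner ℝ (b j) x : ℝ) = 0 := by
  induction hx using Submodule.span_induction with
  | mem y hy =>
      obtain ⟨k, hk, rfl⟩ := hy
      exact b.orthonormal.2 (fun h => hj (h ▸ hk))
  | zero => simp
  | add y z _ _ hy hz => rw [inner_add_right, hy, hz, add_zero]
  | smul c y _ hy => rw [inner_smul_right, hy, mul_zero]

lemma finrank_span_basis (b : OrthonormalBasis (Fin N) ℝ (EuclideanSpace ℝ (Fin N)))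
    (J : Finset (Fin N)) :
    Module.finrank ℝ (Submodule.span ℝ (b '' ↑J)) = J.card := by
  have hli : LinearIndependent ℝ (fun j : J => b j) :=
    (b.orthonormal.comp (Subtype.val : J → Fin N) Subtype.val_injective).linearIndependent
  have hr : Set.range (fun j : J => b j) = b '' ↑J := by
    ext y
    simp [Set.mem_image, Set.range, Subtype.exists]
  rw [← hr, finrank_span_eq_card hli, Fintype.card_coe]

lemma exists_nonzero_inter (b c : OrthonormalBasis (Fin N) ℝ (EuclideanSpace ℝ (Fin N)))
    (J K : Finset (Fin N)) (hcard : N < J.card + K.card) :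
    ∃ x : EuclideanSpace ℝ (Fin N), x ≠ 0 ∧ x ∈ Submodule.span ℝ (b '' ↑J)
      ∧ x ∈ Submodule.span ℝ (c '' ↑K) := by
  set S := Submodule.span ℝ (b '' ↑J)
  set T := Submodule.span ℝ (c '' ↑K)
  have h1 : Module.finrank ℝ (S ⊔ T : Submodule ℝ _) + Module.finrank ℝ (S ⊓ T : Submodule ℝ _)
      = J.card + K.card := by
    rw [Submodule.finrank_sup_add_finrank_inf_eq, finrank_span_basis, finrank_span_basis]
  have h2 : Module.finrank ℝ (S ⊔ T : Submodule ℝ _) ≤ N := by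
    have := Submodule.finrank_le (S ⊔ T)
    simpa [finrank_euclideanSpace_fin] using this
  have h3 : 0 < Module.finrank ℝ (S ⊓ T : Submodule ℝ _) := by omega
  obtain ⟨⟨x, hxm⟩, hx0⟩ := Module.finrank_pos_iff_exists_ne_zero.mp h3
  exact ⟨x, by simpa using hx0, hxm.1, hxm.2⟩

lemma qf_ge_on_span {A : Matrix (Fin N) (Fin N) ℝ} (hA : A.IsHermitian) (J : Finset (Fin N))
    (c : ℝ) (hJ : ∀ j ∈ J, c ≤ hA.eigenvalues j) (x : EuclideanSpace ℝ (Fin N))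
    (hx : x ∈ Submodule.span ℝ (hA.eigenvectorBasis '' ↑J)) :
    c * (∑ i, x i ^ 2) ≤ qf A x := by
  rw [qf_eq_sum A hA, norm_eq_sum A hA, Finset.mul_sum]
  apply Finset.sum_le_sum
  intro j _
  by_cases hj : j ∈ J
  · have := hJ j hj
    nlinarith [sq_nonneg (inner ℝ (hA.eigenvectorBasis j) x : ℝ)]
  · rw [inner_eq_zero_of_mem_span hA.eigenvectorBasis J hx hj]
    simp

lemma qf_le_on_span {A : Matrix (Fin N) (Fin N) ℝ} (hA : A.IsHermitian) (J : Finset (Fin N))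
    (c : ℝ) (hJ : ∀ j ∈ J, hA.eigenvalues j ≤ c) (x : EuclideanSpace ℝ (Fin N))
    (hx : x ∈ Submodule.span ℝ (hA.eigenvectorBasis '' ↑J)) :
    qf A x ≤ c * (∑ i, x i ^ 2) := by
  rw [qf_eq_sum A hA, norm_eq_sum A hA, Finset.mul_sum]
  apply Finset.sum_le_sum
  intro j _
  by_cases hj : j ∈ J
  · have := hJ j hj
    nlinarith [sq_nonneg (inner ℝ (hA.eigenvectorBasis j) x : ℝ)]
  · rw [inner_eq_zero_of_mem_span hA.eigenvectorBasis J hx hj]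
    simp

lemma card_Iic_Ici (i : Fin N) : (Finset.Iic i).card + (Finset.Ici i).card = N + 1 := by
  have h1 : (Finset.Iic i) ∪ (Finset.Ici i) = Finset.univ := by
    ext j; simp [le_total]
  have h2 : (Finset.Iic i) ∩ (Finset.Ici i) = {i} := by
    ext j
    simp only [Finset.mem_inter, Finset.mem_Iic, Finset.mem_Ici, Finset.mem_singleton]
    exact ⟨fun ⟨h, h'⟩ => le_antisymm h h', fun h => by simp [h]⟩
  have h3 := Finset.card_union_add_card_inter (Finset.Iic i) (Finset.Ici i)
  rw [h1, h2] at h3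
  simp only [Finset.card_univ, Fintype.card_fin, Finset.card_singleton] at h3
  omega

lemma weyl_one {A B : Matrix (Fin N) (Fin N) ℝ} (hA : A.IsHermitian) (hB : B.IsHermitian)
    {μ ν : Fin N → ℝ} (hμ : Antitone μ) (hν : Antitone ν) (e f : Equiv.Perm (Fin N))
    (hμe : ∀ i, μ (e i) = hA.eigenvalues i) (hνf : ∀ i, ν (f i) = hB.eigenvalues i)
    {R : ℝ} (hR : ∀ x : Fin N → ℝ, qf (A - B) x ≤ R * ∑ i, x i ^ 2) (i : Fin N) :
    μ i ≤ ν i + R := by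
  set J := (Finset.Iic i).image ⇑e.symm with hJdef
  set K := (Finset.Ici i).image ⇑f.symm with hKdef
  have hJc : J.card = (Finset.Iic i).card := Finset.card_image_of_injective _ e.symm.injective
  have hKc : K.card = (Finset.Ici i).card := Finset.card_image_of_injective _ f.symm.injective
  have hcard : N < J.card + K.card := by
    rw [hJc, hKc]; have := card_Iic_Ici i; omega
  obtain ⟨x, hx0, hxS, hxT⟩ :=
    exists_nonzero_inter hA.eigenvectorBasis hB.eigenvectorBasis J K hcard
  have hS : 0 < ∑ t, x t ^ 2 := by
    have hex : ∃ k, x k ≠ 0 := by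
      by_contra h
      push_neg at h
      exact hx0 (by ext k; exact h k)
    obtain ⟨k, hk⟩ := hex
    exact Finset.sum_pos' (fun t _ => sq_nonneg _) ⟨k, Finset.mem_univ k, by positivity⟩
  have h1 : μ i * (∑ t, x t ^ 2) ≤ qf A x := by
    apply qf_ge_on_span hA J (μ i) _ x hxS
    intro j hj
    rw [hJdef] at hj
    simp only [Finset.mem_image, Finset.mem_Iic] at hj
    obtain ⟨k, hk, rfl⟩ := hj
    have : μ i ≤ μ k := hμ hk
    calc μ i ≤ μ k := this
      _ = μ (e (e.symm k)) := by simp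
      _ = hA.eigenvalues (e.symm k) := hμe _
  have h2 : qf B x ≤ ν i * (∑ t, x t ^ 2) := by
    apply qf_le_on_span hB K (ν i) _ x hxT
    intro j hj
    rw [hKdef] at hj
    simp only [Finset.mem_image, Finset.mem_Ici] at hj
    obtain ⟨k, hk, rfl⟩ := hj
    calc hB.eigenvalues (f.symm k) = ν (f (f.symm k)) := (hνf _).symm
      _ = ν k := by simp
      _ ≤ ν i := hν hk
  have h3 := hR x
  have h4 : qf (A - B) x = qf A x - qf B x := by
    simp only [qf, Matrix.sub_mulVec, Pi.sub_apply, mul_sub, Finset.sum_sub_distrib]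
  nlinarith
lemma qf_abs_le {E : Matrix (Fin N) (Fin N) ℝ} {R : ℝ}
    (hrow : ∀ i, ∑ j, |E i j| ≤ R) (hcol : ∀ j, ∑ i, |E i j| ≤ R)
    (x : Fin N → ℝ) : |qf E x| ≤ R * ∑ i, x i ^ 2 := by
  have key : ∀ i : Fin N, |x i * (E *ᵥ x) i| ≤ ∑ j, |E i j| * (x i ^ 2 + x j ^ 2) / 2 := by
    intro i
    have h0 : x i * (E *ᵥ x) i = ∑ j, x i * (E i j * x j) := by
      simp [Matrix.mulVec, dotProduct, Finset.mul_sum]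
    rw [h0]
    refine (Finset.abs_sum_le_sum_abs _ _).trans (Finset.sum_le_sum fun j _ => ?_)
    have h1 : |x i * (E i j * x j)| = |E i j| * (|x i| * |x j|) := by
      rw [abs_mul, abs_mul]; ring
    rw [h1]
    have h2 : |x i| * |x j| ≤ (x i ^ 2 + x j ^ 2) / 2 := by
      nlinarith [sq_nonneg (|x i| - |x j|), sq_abs (x i), sq_abs (x j)]
    have h3 := abs_nonneg (E i j)
    nlinarith
  have step1 : |qf E x| ≤ ∑ i, ∑ j, |E i j| * (x i ^ 2 + x j ^ 2) / 2 :=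
    (Finset.abs_sum_le_sum_abs _ _).trans (Finset.sum_le_sum fun i _ => key i)
  have expand : ∑ i, ∑ j, |E i j| * (x i ^ 2 + x j ^ 2) / 2
      = (∑ i, (∑ j, |E i j|) * (x i ^ 2 / 2)) + (∑ j, (∑ i, |E i j|) * (x j ^ 2 / 2)) := by
    have e1 : ∀ i j : Fin N, |E i j| * (x i ^ 2 + x j ^ 2) / 2
        = |E i j| * (x i ^ 2 / 2) + |E i j| * (x j ^ 2 / 2) := fun i j => by ring
    simp_rw [e1, Finset.sum_add_distrib]
    congr 1
    · congr 1; ext i; rw [Finset.sum_mul]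
    · rw [Finset.sum_comm]; congr 1; ext j; rw [Finset.sum_mul]
  have b1 : (∑ i, (∑ j, |E i j|) * (x i ^ 2 / 2)) ≤ ∑ i, R * (x i ^ 2 / 2) :=
    Finset.sum_le_sum fun i _ => mul_le_mul_of_nonneg_right (hrow i) (by positivity)
  have b2 : (∑ j, (∑ i, |E i j|) * (x j ^ 2 / 2)) ≤ ∑ j, R * (x j ^ 2 / 2) :=
    Finset.sum_le_sum fun j _ => mul_le_mul_of_nonneg_right (hcol j) (by positivity)
  have hfin : (∑ i, R * (x i ^ 2 / 2)) + (∑ j, R * (x j ^ 2 / 2)) = R * ∑ i, x i ^ 2 := by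
    rw [← Finset.mul_sum, ← Finset.sum_div]
    ring
  linarith [step1, expand ▸ step1]

lemma sum_split (a b : Fin N) (hab : a ≠ b) (g : Fin N → ℝ) :
    ∑ j, g j = g a + g b + ∑ j ∈ (Finset.univ.erase a).erase b, g j := by
  rw [← Finset.add_sum_erase _ g (Finset.mem_univ a),
    ← Finset.add_sum_erase _ g (Finset.mem_erase.mpr ⟨hab.symm, Finset.mem_univ b⟩)]
  ring

lemma row_a_bound (W : Matrix (Fin N) (Fin N) ℝ) (a b : Fin N) (hab : a ≠ b)
    (hsymm : W.IsSymm) (d : Fin N → ℝ) (hd : ∀ i, d i = ∑ j, W i j)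
    (Wl : Matrix (Fin N) (Fin N) ℝ)
    (hWl : ∀ i j, Wl i j =
      if (i = a ∨ i = b) ∧ (j = a ∨ j = b) then (W a a + 2 * W a b + W b b) / 4
      else if i = a ∨ i = b then (W a j + W b j) / 2
      else if j = a ∨ j = b then (W i a + W i b) / 2
      else W i j)
    (dl : Fin N → ℝ) (hdl : ∀ i, dl i = if i = a ∨ i = b then (d a + d b) / 2 else d i) :
    ∑ j, |((Matrix.diagonal d - W) - (Matrix.diagonal dl - Wl)) a j|
      ≤ 3 / 2 * ∑ j, |W a j - W b j| := by
  have hba : W b a = W a b := hsymm.apply a b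
  set E := (Matrix.diagonal d - W) - (Matrix.diagonal dl - Wl) with hE
  set p := W a a - W a b with hp
  set q := W a b - W b b with hq
  set u := d a - d b with hu
  -- entry values
  have haa : E a a = u / 2 - (3 * p + q) / 4 := by
    simp only [hE, Matrix.sub_apply, Matrix.diagonal_apply_eq]
    rw [hdl a, hWl a a]
    simp only [eq_self_iff_true, true_or, or_true, true_and, and_self, if_true]
    rw [hp, hq, hu]; ring
  have habv : E a b = (p - q) / 4 := by
    simp only [hE, Matrix.sub_apply, Matrix.diagonal_apply_ne _ hab]
    rw [hWl a b]
    simp only [eq_self_iff_true, true_or, or_true, true_and, and_self, if_true]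
    rw [hp, hq]; ring
  have haj : ∀ j, j ≠ a → j ≠ b → E a j = -((W a j - W b j) / 2) := by
    intro j hja hjb
    simp only [hE, Matrix.sub_apply, Matrix.diagonal_apply_ne _ (Ne.symm hja)]
    rw [hWl a j]
    have hc1 : ¬((a = a ∨ a = b) ∧ (j = a ∨ j = b)) := by tauto
    rw [if_neg hc1, if_pos (Or.inl rfl)]
    ring
  -- split both sums
  rw [sum_split a b hab (fun j => |E a j|), sum_split a b hab (fun j => |W a j - W b j|)]
  have hrest : ∑ j ∈ (Finset.univ.erase a).erase b, |E a j|
      = (∑ j ∈ (Finset.univ.erase a).erase b, |W a j - W b j|) / 2 := by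
    rw [Finset.sum_div]
    apply Finset.sum_congr rfl
    intro j hj
    have hjb : j ≠ b := (Finset.mem_erase.mp hj).1
    have hja : j ≠ a := (Finset.mem_erase.mp ((Finset.mem_erase.mp hj).2)).1
    rw [haj j hja hjb, abs_neg, abs_div]
    norm_num
  rw [hrest, haa, habv, hba]
  set r := ∑ j ∈ (Finset.univ.erase a).erase b, |W a j - W b j| with hr
  have hrnn : 0 ≤ r := Finset.sum_nonneg fun j _ => abs_nonneg _
  have hP : |u| ≤ |p| + |q| + r := by
    have h1 : u = ∑ j, (W a j - W b j) := by
      rw [hu, hd a, hd b, ← Finset.sum_sub_distrib]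
    have h2 : |∑ j, (W a j - W b j)| ≤ ∑ j, |W a j - W b j| := Finset.abs_sum_le_sum_abs _ _
    rw [sum_split a b hab (fun j => |W a j - W b j|)] at h2
    rw [h1]
    calc |∑ j, (W a j - W b j)| ≤ _ := h2
      _ = |p| + |q| + r := by rw [hba, hp, hq, hr]
  have h3 : |u / 2 - (3 * p + q) / 4| ≤ |u| / 2 + (3 * |p| + |q|) / 4 :=
    abs_le.mpr ⟨by
      have := le_abs_self u; have := neg_abs_le u
      have := le_abs_self p; have := neg_abs_le p
      have := le_abs_self q; have := neg_abs_le q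
      linarith,
      by
      have := le_abs_self u; have := neg_abs_le u
      have := le_abs_self p; have := neg_abs_le p
      have := le_abs_self q; have := neg_abs_le q
      linarith⟩
  have h4 : |(p - q) / 4| ≤ (|p| + |q|) / 4 :=
    abs_le.mpr ⟨by
      have := le_abs_self p; have := neg_abs_le p
      have := le_abs_self q; have := neg_abs_le q
      linarith,
      by
      have := le_abs_self p; have := neg_abs_le p
      have := le_abs_self q; have := neg_abs_le q
      linarith⟩
  have hqnn : 0 ≤ |q| := abs_nonneg q
  have hpnn : 0 ≤ |p| := abs_nonneg p
  linarith

lemma row_off_bound (W : Matrix (Fin N) (Fin N) ℝ) (a b : Fin N) (hab : a ≠ b)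
    (hsymm : W.IsSymm) (d : Fin N → ℝ)
    (Wl : Matrix (Fin N) (Fin N) ℝ)
    (hWl : ∀ i j, Wl i j =
      if (i = a ∨ i = b) ∧ (j = a ∨ j = b) then (W a a + 2 * W a b + W b b) / 4
      else if i = a ∨ i = b then (W a j + W b j) / 2
      else if j = a ∨ j = b then (W i a + W i b) / 2
      else W i j)
    (dl : Fin N → ℝ) (hdl : ∀ i, dl i = if i = a ∨ i = b then (d a + d b) / 2 else d i)
    (i : Fin N) (hia : i ≠ a) (hib : i ≠ b) :
    ∑ j, |((Matrix.diagonal d - W) - (Matrix.diagonal dl - Wl)) i j|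
      ≤ 3 / 2 * ∑ j, |W a j - W b j| := by
  set E := (Matrix.diagonal d - W) - (Matrix.diagonal dl - Wl) with hE
  have hcondi : ¬(i = a ∨ i = b) := by tauto
  have hia' : E i a = -((W i a - W i b) / 2) := by
    simp only [hE, Matrix.sub_apply, Matrix.diagonal_apply_ne _ hia]
    rw [hWl i a]
    simp only [hcondi, false_and, if_false, eq_self_iff_true, true_or, or_true, if_true]
    ring
  have hib' : E i b = (W i a - W i b) / 2 := by
    simp only [hE, Matrix.sub_apply, Matrix.diagonal_apply_ne _ hib]
    rw [hWl i b]
    simp only [hcondi, false_and, if_false, eq_self_iff_true, true_or, or_true, if_true]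
    ring
  have hij : ∀ j, j ≠ a → j ≠ b → E i j = 0 := by
    intro j hja hjb
    have hcondj : ¬(j = a ∨ j = b) := by tauto
    by_cases hji : i = j
    · subst hji
      simp only [hE, Matrix.sub_apply, Matrix.diagonal_apply_eq]
      rw [hWl i i, hdl i]
      simp only [hcondi, false_and, if_false]
      ring
    · simp only [hE, Matrix.sub_apply, Matrix.diagonal_apply_ne _ hji]
      rw [hWl i j]
      simp only [hcondi, hcondj, false_and, if_false]
      ring
  rw [sum_split a b hab (fun j => |E i j|)]
  have hrest : ∑ j ∈ (Finset.univ.erase a).erase b, |E i j| = 0 := by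
    apply Finset.sum_eq_zero
    intro j hj
    have hjb : j ≠ b := (Finset.mem_erase.mp hj).1
    have hja : j ≠ a := (Finset.mem_erase.mp ((Finset.mem_erase.mp hj).2)).1
    rw [hij j hja hjb, abs_zero]
  rw [hrest, hia', hib', abs_neg]
  have hsym1 : W i a = W a i := (hsymm.apply i a).symm
  have hsym2 : W i b = W b i := (hsymm.apply i b).symm
  have hle : |W i a - W i b| ≤ ∑ j, |W a j - W b j| := by
    rw [hsym1, hsym2]
    exact Finset.single_le_sum (f := fun j => |W a j - W b j|)
      (fun j _ => abs_nonneg _) (Finset.mem_univ i)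
  have hnn : 0 ≤ ∑ j, |W a j - W b j| := Finset.sum_nonneg fun j _ => abs_nonneg _
  have : |(W i a - W i b) / 2| = |W i a - W i b| / 2 := by rw [abs_div]; norm_num
  rw [this]
  linarith
lemma weyl_abs {A B : Matrix (Fin N) (Fin N) ℝ} (hA : A.IsHermitian) (hB : B.IsHermitian)
    {μ ν : Fin N → ℝ} (hμ : Antitone μ) (hν : Antitone ν) (e f : Equiv.Perm (Fin N))
    (hμe : ∀ i, μ (e i) = hA.eigenvalues i) (hνf : ∀ i, ν (f i) = hB.eigenvalues i)
    {R : ℝ} (hR : ∀ x : Fin N → ℝ, |qf (A - B) x| ≤ R * ∑ i, x i ^ 2) (i : Fin N) :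
    |μ i - ν i| ≤ R := by
  have hBA : ∀ x : Fin N → ℝ, qf (B - A) x ≤ R * ∑ i, x i ^ 2 := by
    intro x
    have h := (abs_le.mp (hR x)).1
    have hq : qf (B - A) x = -(qf (A - B) x) := by
      simp only [qf, Matrix.sub_mulVec, Pi.sub_apply, mul_sub, Finset.sum_sub_distrib]
      ring
    linarith
  have h1 := weyl_one hA hB hμ hν e f hμe hνf (fun x => (abs_le.mp (hR x)).2) i
  have h2 := weyl_one hB hA hν hμ f e hνf hμe hBA i
  exact abs_sub_le_iff.mpr ⟨by linarith, by linarith⟩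

theorem stmt6 (N : ℕ) (W : Matrix (Fin N) (Fin N) ℝ) (a b : Fin N) (hab : a ≠ b)
    (hsymm : W.IsSymm) (hnonneg : ∀ i j, 0 ≤ W i j) (ε : ℝ)
    (d : Fin N → ℝ) (hd : ∀ i, d i = ∑ j, W i j)
    (Wl : Matrix (Fin N) (Fin N) ℝ)
    (hWl : ∀ i j, Wl i j =
      if (i = a ∨ i = b) ∧ (j = a ∨ j = b) then (W a a + 2 * W a b + W b b) / 4
      else if i = a ∨ i = b then (W a j + W b j) / 2
      else if j = a ∨ j = b then (W i a + W i b) / 2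
      else W i j)
    (dl : Fin N → ℝ) (hdl : ∀ i, dl i = if i = a ∨ i = b then (d a + d b) / 2 else d i)
    (L Ll : Matrix (Fin N) (Fin N) ℝ)
    (hLdef : L = Matrix.diagonal d - W) (hLldef : Ll = Matrix.diagonal dl - Wl)
    (hL : L.IsHermitian) (hLl : Ll.IsHermitian)
    (μ ν : Fin N → ℝ) (hμ : Antitone μ) (hν : Antitone ν)
    (e f : Equiv.Perm (Fin N))
    (hμe : ∀ i, μ (e i) = hL.eigenvalues i)
    (hνf : ∀ i, ν (f i) = hLl.eigenvalues i)
    (hrow : ∑ j, |W a j - W b j| ≤ ε) :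
    ∑ i, |μ i - ν i| ≤ (3 * N / 2) * ε := by
  subst hLdef hLldef
  have hs_nonneg : 0 ≤ ∑ j, |W a j - W b j| := Finset.sum_nonneg fun j _ => abs_nonneg _
  have hεnn : (0:ℝ) ≤ ε := le_trans hs_nonneg hrow
  have hba : W b a = W a b := hsymm.apply a b
  have hWl' : ∀ i j, Wl i j =
      if (i = b ∨ i = a) ∧ (j = b ∨ j = a) then (W b b + 2 * W b a + W a a) / 4
      else if i = b ∨ i = a then (W b j + W a j) / 2
      else if j = b ∨ j = a then (W i b + W i a) / 2
      else W i j := by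
    intro i j
    rw [hWl i j, hba]
    have e1 : (i = b ∨ i = a) = (i = a ∨ i = b) := propext or_comm
    have e2 : (j = b ∨ j = a) = (j = a ∨ j = b) := propext or_comm
    simp only [e1, e2]
    split_ifs <;> ring
  have hdl' : ∀ i, dl i = if i = b ∨ i = a then (d b + d a) / 2 else d i := by
    intro i
    rw [hdl i]
    have e1 : (i = b ∨ i = a) = (i = a ∨ i = b) := propext or_comm
    simp only [e1]
    split_ifs <;> ring
  have hsrev : ∑ j, |W b j - W a j| = ∑ j, |W a j - W b j| :=
    Finset.sum_congr rfl fun j _ => abs_sub_comm _ _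
  have hrowsum : ∀ i,
      ∑ j, |((Matrix.diagonal d - W) - (Matrix.diagonal dl - Wl)) i j| ≤ 3 / 2 * ε := by
    intro i
    by_cases hia : i = a
    · subst hia
      calc ∑ j, |((Matrix.diagonal d - W) - (Matrix.diagonal dl - Wl)) i j|
          ≤ 3 / 2 * ∑ j, |W i j - W b j| := row_a_bound W i b hab hsymm d hd Wl hWl dl hdl
        _ ≤ 3 / 2 * ε := by linarith
    · by_cases hib : i = b
      · subst hib
        have h := row_a_bound W i a (Ne.symm hab) hsymm d hd Wl hWl' dl hdl'
        rw [hsrev] at h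
        calc ∑ j, |((Matrix.diagonal d - W) - (Matrix.diagonal dl - Wl)) i j|
            ≤ 3 / 2 * ∑ j, |W a j - W i j| := h
          _ ≤ 3 / 2 * ε := by linarith
      · have h := row_off_bound W a b hab hsymm d Wl hWl dl hdl i hia hib
        calc ∑ j, |((Matrix.diagonal d - W) - (Matrix.diagonal dl - Wl)) i j|
            ≤ 3 / 2 * ∑ j, |W a j - W b j| := h
          _ ≤ 3 / 2 * ε := by linarith
  have hEH : ((Matrix.diagonal d - W) - (Matrix.diagonal dl - Wl)).IsHermitian := hL.sub hLl
  have hcolsum : ∀ j,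
      ∑ i, |((Matrix.diagonal d - W) - (Matrix.diagonal dl - Wl)) i j| ≤ 3 / 2 * ε := by
    intro j
    have heq : ∀ i, ((Matrix.diagonal d - W) - (Matrix.diagonal dl - Wl)) i j
        = ((Matrix.diagonal d - W) - (Matrix.diagonal dl - Wl)) j i := by
      intro i
      have h := hEH.apply j i
      simpa using h
    calc ∑ i, |((Matrix.diagonal d - W) - (Matrix.diagonal dl - Wl)) i j|
        = ∑ i, |((Matrix.diagonal d - W) - (Matrix.diagonal dl - Wl)) j i| :=
          Finset.sum_congr rfl fun i _ => by rw [heq i]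
      _ ≤ 3 / 2 * ε := hrowsum j
  have key : ∀ i, |μ i - ν i| ≤ 3 / 2 * ε := fun i =>
    weyl_abs hL hLl hμ hν e f hμe hνf (fun x => qf_abs_le hrowsum hcolsum x) i
  calc ∑ i, |μ i - ν i| ≤ ∑ _i : Fin N, 3 / 2 * ε := Finset.sum_le_sum fun i _ => key i
    _ = N * (3 / 2 * ε) := by
        rw [Finset.sum_const, Finset.card_univ, Fintype.card_fin, nsmul_eq_mul]
    _ = (3 * N / 2) * ε := by ring
end
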